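/- arXiv:1904.00258 — 2 statements merged into one kernel-verified Lean document; each statement's English description precedes it below -/
import Mathlib

section
/- Let 0 < α < 1, 0 ≤ μ ≤ 1, λ > 0, and set β = α + μ(1−α). For γ > 0 define the Riemann–Liouville integral (I^γ g)(t) = (1/Γ(γ)) ∫_0^t (t−s)^{γ−1} g(s) ds, and set I^0 g = g. Define f(t) = ∑_{j=0}^∞ (−λ)^j t^{αj+β−1} / Γ(αj + β) for t > 0. Then for every t > 0, the Hilfer fractional derivative of f of order α and type μ satisfies (I^{μ(1−α)} ( d/ds [ (I^{(1−μ)(1−α)} f)(s) ] ))(t) = −λ f(t). -/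
open Real Set intervalIntegral

/-- The Riemann–Liouville fractional integral of order `γ ≥ 0`
(with the convention `I^0 g = g`). -/
noncomputable def riemannLiouville (γ : ℝ) (g : ℝ → ℝ) (t : ℝ) : ℝ :=
  if γ = 0 then g t
  else (1 / Real.Gamma γ) * ∫ s in (0 : ℝ)..t, (t - s) ^ (γ - 1) * g s

/-!
Write `e_c(t) = ∑ⱼ (-λ)ʲ t^(αj+c-1) / Γ(αj+c)`. The Beta integral, applied term by term,
gives `I^γ e_c = e_(γ+c)` for `γ ≥ 0`, `c > 0`, and termwise differentiation gives
`e_c' = e_(c-1)`; moreover `e_0 = -λ e_α`, since the `j = 0` term of `e_0` carries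
`1 / Γ(0) = 0`. Hence `I^((1-μ)(1-α)) f = e_1`, its derivative is `-λ e_α`, and `I^(μ(1-α))`
maps this to `-λ e_(α+μ(1-α)) = -λ f`. Both interchanges are justified by the bound
`R^(y-1) e^(-R) ≤ Γ(y)` for `y ≥ 1`, which makes `∑ⱼ xʲ / Γ(αj+c)` converge for every `x`.
-/

open MeasureTheory Filter

namespace Real

-- valid at every `s`, the poles included, because `Gamma` is `0` there
theorem div_Gamma_add_one (s : ℝ) : s / Gamma (s + 1) = 1 / Gamma s := by
  rcases eq_or_ne s 0 with rfl | hs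
  · simp
  · rw [Gamma_add_one hs, div_mul_cancel_left₀ hs, one_div]

theorem rpow_mul_exp_neg_le_Gamma {y R : ℝ} (hy : 1 ≤ y) (hR : 0 ≤ R) :
    R ^ (y - 1) * exp (-R) ≤ Gamma y := by
  have hint := GammaIntegral_convergent (by linarith : 0 < y)
  calc R ^ (y - 1) * exp (-R) = ∫ x in Ioi R, exp (-x) * R ^ (y - 1) := by
        rw [MeasureTheory.integral_mul_const, integral_exp_neg_Ioi, mul_comm]
    _ ≤ ∫ x in Ioi R, exp (-x) * x ^ (y - 1) := by
        refine setIntegral_mono_on ((integrableOn_exp_neg_Ioi R).mul_const _)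
          (hint.mono_set (Ioi_subset_Ioi hR)) measurableSet_Ioi fun x hx => ?_
        gcongr
        exact le_of_lt hx
    _ ≤ ∫ x in Ioi 0, exp (-x) * x ^ (y - 1) :=
        setIntegral_mono_set hint
          (ae_restrict_of_forall_mem measurableSet_Ioi fun x hx =>
            mul_nonneg (exp_pos _).le (rpow_nonneg (le_of_lt hx) _))
          (Ioi_subset_Ioi hR).eventuallyLE
    _ = Gamma y := (Gamma_eq_integral (by linarith)).symm

theorem rpow_le_rpow_add_rpow_of_mem_Icc {a b z : ℝ} (ha : 0 < a) (hz : z ∈ Icc a b)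
    (e : ℝ) : z ^ e ≤ a ^ e + b ^ e := by
  rcases le_total 0 e with he | he
  · exact (rpow_le_rpow (ha.le.trans hz.1) hz.2 he).trans
      (le_add_of_nonneg_left (rpow_nonneg ha.le e))
  · exact (rpow_le_rpow_of_nonpos ha hz.1 he).trans
      (le_add_of_nonneg_right (rpow_nonneg (ha.le.trans (hz.1.trans hz.2)) e))

end Real

theorem summable_pow_div_Gamma {α : ℝ} (hα : 0 < α) (c x : ℝ) :
    Summable fun j : ℕ => x ^ j / Real.Gamma (α * j + c) := by
  set q := 2 * |x| + 1
  set R := q ^ (1 / α)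
  have hq : 0 < q := by positivity
  have hR : 0 < R := rpow_pos_of_pos hq _
  have hRpow (j : ℕ) : R ^ (α * j) = q ^ j := by
    rw [← rpow_mul hq.le, show 1 / α * (α * j) = j by field_simp, rpow_natCast]
  have hgeom : Summable fun j : ℕ => (R ^ (c - 1) * exp (-R))⁻¹ * (|x| / q) ^ j :=
    (summable_geometric_of_lt_one (by positivity)
      ((div_lt_one hq).2 (by linarith [abs_nonneg x]))).mul_left _
  refine .of_norm_bounded_eventually_nat hgeom ?_
  have hlarge : ∀ᶠ j : ℕ in atTop, 1 ≤ α * j + c :=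
    ((tendsto_natCast_atTop_atTop.const_mul_atTop hα).atTop_add
      tendsto_const_nhds).eventually_ge_atTop 1
  filter_upwards [hlarge] with j hj
  have hlow : R ^ (c - 1) * exp (-R) * q ^ j ≤ Real.Gamma (α * j + c) := by
    have := Real.rpow_mul_exp_neg_le_Gamma hj hR.le
    rwa [add_sub_assoc, rpow_add hR, hRpow, mul_comm (q ^ j), mul_assoc,
      mul_comm (q ^ j), ← mul_assoc] at this
  have hpos : 0 < R ^ (c - 1) * exp (-R) * q ^ j := by positivity
  rw [norm_div, norm_pow, Real.norm_eq_abs, Real.norm_of_nonneg (hpos.le.trans hlow), div_pow,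
    ← mul_div_assoc, inv_mul_eq_div, div_div]
  exact div_le_div_of_nonneg_left (by positivity) hpos hlow

theorem intervalIntegrable_and_integral_sub_rpow_mul_rpow {p q t : ℝ} (hp : 0 < p)
    (hq : 0 < q) (ht : 0 < t) :
    IntervalIntegrable (fun s => (t - s) ^ (p - 1) * s ^ (q - 1)) volume 0 t ∧
      ∫ s in (0 : ℝ)..t, (t - s) ^ (p - 1) * s ^ (q - 1) =
        Gamma p * Gamma q / Gamma (p + q) * t ^ (p + q - 1) := by
  set G : ℝ → ℂ := fun s => (s : ℂ) ^ ((q : ℂ) - 1) * ((t : ℂ) - s) ^ ((p : ℂ) - 1)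
  have hG : EqOn (fun s : ℝ => (((t - s) ^ (p - 1) * s ^ (q - 1) : ℝ) : ℂ)) G (uIcc 0 t) := by
    intro s hs
    rw [uIcc_of_le ht.le] at hs
    simp only [G, Complex.ofReal_mul, Complex.ofReal_cpow hs.1,
      Complex.ofReal_cpow (sub_nonneg.2 hs.2), Complex.ofReal_sub, Complex.ofReal_one]
    ring
  have hval : ∫ s in (0 : ℝ)..t, G s =
      ((Gamma p * Gamma q / Gamma (p + q) * t ^ (p + q - 1) : ℝ) : ℂ) := by
    rw [Complex.betaIntegral_scaled _ _ ht, Complex.betaIntegral_eq_Gamma_mul_div _ _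
      (by simpa using hq) (by simpa using hp), ← Complex.ofReal_add, Complex.Gamma_ofReal,
      Complex.Gamma_ofReal, Complex.Gamma_ofReal, add_comm q p]
    push_cast [Complex.ofReal_cpow ht.le]
    ring_nf
  have hpos : 0 < Gamma p * Gamma q / Gamma (p + q) * t ^ (p + q - 1) := by
    have := Gamma_pos_of_pos hp
    have := Gamma_pos_of_pos hq
    have := Gamma_pos_of_pos (add_pos hp hq)
    positivity
  -- a non-integrable integrand would have integral `0`
  have hGint : IntervalIntegrable G volume 0 t := by
    by_contra h
    rw [intervalIntegral.integral_undef h, eq_comm, Complex.ofReal_eq_zero] at hval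
    exact hpos.ne' hval
  constructor
  · have h := (hGint.congr (hG.symm.mono uIoc_subset_uIcc)).def'.re
    simp only [RCLike.re_to_complex, Complex.ofReal_re] at h
    exact intervalIntegrable_iff.2 h
  · exact_mod_cast (integral_ofReal.symm.trans (integral_congr hG)).trans hval

noncomputable def mlTerm (α lam c : ℝ) (j : ℕ) (t : ℝ) : ℝ :=
  (-lam) ^ j * t ^ (α * j + c - 1) / Gamma (α * j + c)

/-- For `t > 0`, `mlKernel α lam c t = t ^ (c - 1) * E_{α,c} (-lam * t ^ α)`, where `E_{α,c}` is
the two-parameter Mittag-Leffler function. -/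
noncomputable def mlKernel (α lam c t : ℝ) : ℝ :=
  ∑' j : ℕ, mlTerm α lam c j t

theorem mlTerm_eq {t : ℝ} (ht : 0 < t) (α lam c : ℝ) (j : ℕ) :
    mlTerm α lam c j t = t ^ (c - 1) * ((-lam * t ^ α) ^ j / Gamma (α * j + c)) := by
  rw [mlTerm, add_sub_assoc, rpow_add ht, rpow_mul ht.le, rpow_natCast, mul_pow]
  ring

theorem summable_mlTerm {α : ℝ} (hα : 0 < α) (lam c : ℝ) {t : ℝ} (ht : 0 < t) :
    Summable fun j => mlTerm α lam c j t := by
  simpa only [mlTerm_eq ht] using (summable_pow_div_Gamma hα c _).mul_left (t ^ (c - 1))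

theorem norm_mlTerm {α c : ℝ} (hα : 0 ≤ α) (hc : 0 < c) (lam : ℝ) (j : ℕ) {t : ℝ}
    (ht : 0 ≤ t) :
    ‖mlTerm α lam c j t‖ = mlTerm α (-|lam|) c j t := by
  have : 0 < Gamma (α * j + c) := Gamma_pos_of_pos (by positivity)
  rw [mlTerm, mlTerm, norm_div, norm_mul, norm_pow, norm_neg, neg_neg, Real.norm_eq_abs,
    Real.norm_of_nonneg (rpow_nonneg ht _), Real.norm_of_nonneg this.le]

theorem hasDerivAt_mlTerm (α lam c : ℝ) (j : ℕ) {t : ℝ} (ht : 0 < t) :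
    HasDerivAt (mlTerm α lam c j) (mlTerm α lam (c - 1) j t) t := by
  have h := ((hasDerivAt_rpow_const (p := α * j + c - 1) (Or.inl ht.ne')).const_mul
    ((-lam) ^ j)).div_const (Gamma (α * j + c))
  have hΓ := Real.div_Gamma_add_one (α * j + c - 1)
  rw [sub_add_cancel] at hΓ
  suffices mlTerm α lam (c - 1) j t =
      (-lam) ^ j * ((α * j + c - 1) * t ^ (α * j + c - 1 - 1)) / Gamma (α * j + c) by
    rw [this]; exact h
  calc mlTerm α lam (c - 1) j t =
        (-lam) ^ j * t ^ (α * j + c - 1 - 1) * (1 / Gamma (α * j + c - 1)) := by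
        rw [mlTerm, show α * j + (c - 1) = α * j + c - 1 by ring]; ring
    _ = _ := by rw [← hΓ]; ring

theorem norm_mlTerm_le_of_mem_Icc (α lam c : ℝ) (j : ℕ) {a b z : ℝ} (ha : 0 < a)
    (hz : z ∈ Icc a b) :
    ‖mlTerm α lam c j z‖ ≤ ‖mlTerm α lam c j a‖ + ‖mlTerm α lam c j b‖ := by
  have hb : 0 < b := ha.trans_le (hz.1.trans hz.2)
  simp only [mlTerm, mul_div_right_comm _ (_ ^ (α * j + c - 1)), norm_mul,
    Real.norm_of_nonneg (rpow_nonneg (ha.le.trans hz.1) _),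
    Real.norm_of_nonneg (rpow_nonneg ha.le _), Real.norm_of_nonneg (rpow_nonneg hb.le _), ← mul_add]
  exact mul_le_mul_of_nonneg_left (Real.rpow_le_rpow_add_rpow_of_mem_Icc ha hz _) (norm_nonneg _)

theorem hasDerivAt_mlKernel {α : ℝ} (hα : 0 < α) (lam c : ℝ) {y : ℝ} (hy : 0 < y) :
    HasDerivAt (mlKernel α lam c) (mlKernel α lam (c - 1) y) y := by
  have hmem : y ∈ Ioo (y / 2) (2 * y) := ⟨by linarith, by linarith⟩
  have hpos : ∀ z ∈ Ioo (y / 2) (2 * y), 0 < z := fun z hz => by linarith [hz.1]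
  exact hasDerivAt_tsum_of_isPreconnected
    (((summable_mlTerm hα lam (c - 1) (half_pos hy)).norm).add
      (summable_mlTerm hα lam (c - 1) (by positivity : (0 : ℝ) < 2 * y)).norm)
    isOpen_Ioo isPreconnected_Ioo
    (fun j z hz => hasDerivAt_mlTerm α lam c j (hpos z hz))
    (fun j z hz =>
      norm_mlTerm_le_of_mem_Icc α lam (c - 1) j (half_pos hy) (Ioo_subset_Icc_self hz))
    hmem (summable_mlTerm hα lam c hy) hmem

theorem mlKernel_zero {α : ℝ} (hα : 0 < α) (lam : ℝ) {t : ℝ} (ht : 0 < t) :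
    mlKernel α lam 0 t = -lam * mlKernel α lam α t := by
  rw [mlKernel, (summable_mlTerm hα lam 0 ht).tsum_eq_zero_add, mlKernel, ← tsum_mul_left]
  simp only [mlTerm, Nat.cast_zero, mul_zero, add_zero, Real.Gamma_zero, div_zero, zero_add,
    Nat.cast_succ, pow_succ]
  congr 1 with j
  ring_nf

theorem intervalIntegrable_and_integral_sub_rpow_mul_mlTerm {α γ c : ℝ} (hα : 0 ≤ α)
    (hγ : 0 < γ) (hc : 0 < c) (lam : ℝ) (j : ℕ) {t : ℝ} (ht : 0 < t) :
    IntervalIntegrable (fun s => (t - s) ^ (γ - 1) * mlTerm α lam c j s) volume 0 t ∧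
      ∫ s in (0 : ℝ)..t, (t - s) ^ (γ - 1) * mlTerm α lam c j s =
        Gamma γ * mlTerm α lam (γ + c) j t := by
  obtain ⟨hint, hval⟩ := intervalIntegrable_and_integral_sub_rpow_mul_rpow hγ
    (by positivity : 0 < α * j + c) ht
  have hF : (fun s => (t - s) ^ (γ - 1) * mlTerm α lam c j s) =
      fun s => (-lam) ^ j / Gamma (α * j + c) * ((t - s) ^ (γ - 1) * s ^ (α * j + c - 1)) := by
    ext s; rw [mlTerm]; ring
  rw [hF]
  refine ⟨hint.const_mul _, ?_⟩
  rw [intervalIntegral.integral_const_mul, hval, mlTerm,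
    show γ + (α * j + c) = α * j + (γ + c) by ring]
  field_simp

theorem riemannLiouville_congr {γ t : ℝ} {g₁ g₂ : ℝ → ℝ} (ht : 0 < t)
    (h : EqOn g₁ g₂ (Ioc 0 t)) :
    riemannLiouville γ g₁ t = riemannLiouville γ g₂ t := by
  unfold riemannLiouville
  split_ifs
  · exact h ⟨ht, le_rfl⟩
  · rw [integral_of_le ht.le, integral_of_le ht.le,
      setIntegral_congr_fun measurableSet_Ioc fun s hs => by rw [h hs]]

theorem riemannLiouville_const_mul (γ a : ℝ) (g : ℝ → ℝ) (t : ℝ) :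
    riemannLiouville γ (fun s => a * g s) t = a * riemannLiouville γ g t := by
  unfold riemannLiouville
  split_ifs
  · rfl
  · simp only [mul_left_comm _ a, intervalIntegral.integral_const_mul]

theorem riemannLiouville_mlKernel {α γ c : ℝ} (hα : 0 < α) (hγ : 0 ≤ γ) (hc : 0 < c) (lam : ℝ)
    {t : ℝ} (ht : 0 < t) :
    riemannLiouville γ (mlKernel α lam c) t = mlKernel α lam (γ + c) t := by
  rcases hγ.eq_or_lt with rfl | hγ
  · simp [riemannLiouville]
  have hterm (l : ℝ) (j : ℕ) :=
    intervalIntegrable_and_integral_sub_rpow_mul_mlTerm hα.le hγ hc l j ht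
  have hnorm (j : ℕ) : ∫ s in Ioc 0 t, ‖(t - s) ^ (γ - 1) * mlTerm α lam c j s‖ =
      Gamma γ * mlTerm α (-|lam|) (γ + c) j t := by
    rw [← (hterm _ j).2, integral_of_le ht.le]
    refine setIntegral_congr_fun measurableSet_Ioc fun s hs => ?_
    rw [norm_mul, norm_mlTerm hα.le hc _ _ hs.1.le,
      Real.norm_of_nonneg (rpow_nonneg (sub_nonneg.2 hs.2) _)]
  have hswap : ∫ s in (0 : ℝ)..t, (t - s) ^ (γ - 1) * mlKernel α lam c s =
      ∑' j, ∫ s in (0 : ℝ)..t, (t - s) ^ (γ - 1) * mlTerm α lam c j s := by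
    simp only [mlKernel, ← tsum_mul_left, integral_of_le ht.le]
    refine (integral_tsum_of_summable_integral_norm (fun j => ?_) ?_).symm
    · exact (intervalIntegrable_iff_integrableOn_Ioc_of_le ht.le).1 (hterm lam j).1
    · simpa only [hnorm] using (summable_mlTerm hα (-|lam|) (γ + c) ht).mul_left (Gamma γ)
  rw [riemannLiouville, if_neg hγ.ne', hswap]
  simp only [(hterm lam _).2, tsum_mul_left, mlKernel]
  field_simp [(Gamma_pos_of_pos hγ).ne']

theorem hilfer_eigenfunction_general
    (α μ lam β : ℝ) (hα0 : 0 < α) (hα1 : α < 1) (hμ0 : 0 ≤ μ) (hμ1 : μ ≤ 1)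
    (hβ : β = α + μ * (1 - α))
    (f : ℝ → ℝ)
    (hf : ∀ t : ℝ, 0 < t →
      f t = ∑' j : ℕ, (-lam) ^ j * t ^ (α * j + β - 1) / Real.Gamma (α * j + β)) :
    ∀ t : ℝ, 0 < t →
      riemannLiouville (μ * (1 - α))
        (fun s => deriv (riemannLiouville ((1 - μ) * (1 - α)) f) s) t = -lam * f t := by
  intro t ht
  have hβ0 : 0 < β := by nlinarith
  have hf' : EqOn f (mlKernel α lam β) (Ioi 0) := hf
  have hI : EqOn (riemannLiouville ((1 - μ) * (1 - α)) f) (mlKernel α lam 1) (Ioi 0) :=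
    fun s hs => by
      rw [riemannLiouville_congr hs (hf'.mono Ioc_subset_Ioi_self),
        riemannLiouville_mlKernel hα0 (by nlinarith) hβ0 lam hs,
        show (1 - μ) * (1 - α) + β = 1 by rw [hβ]; ring]
  have hD : EqOn (deriv (riemannLiouville ((1 - μ) * (1 - α)) f))
      (fun s => -lam * mlKernel α lam α s) (Ioi 0) := fun s hs => by
    rw [(hI.eventuallyEq_of_mem (Ioi_mem_nhds hs)).deriv_eq,
      (hasDerivAt_mlKernel hα0 lam 1 hs).deriv, sub_self, mlKernel_zero hα0 lam hs]
  rw [riemannLiouville_congr ht (hD.mono Ioc_subset_Ioi_self), riemannLiouville_const_mul,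
    riemannLiouville_mlKernel hα0 (by nlinarith) hα0 lam ht, hf' ht,
    show μ * (1 - α) + α = β by rw [hβ]; ring]

/-- The function `f(t) = Γ(β) t^{β-1} E_{α,β}(-λ t^α)`, `β = α + μ(1-α)`, is an
eigenfunction of the Hilfer fractional derivative of order `α` and type `μ`:
`D^{α,μ}_{0t} f = I^{μ(1-α)} (d/dt) I^{(1-μ)(1-α)} f = -λ f` on `(0,∞)`. -/
theorem hilfer_eigenfunction
    (α μ lam β : ℝ) (hα0 : 0 < α) (hα1 : α < 1) (hμ0 : 0 ≤ μ) (hμ1 : μ ≤ 1)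
    (hlam : 0 < lam) (hβ : β = α + μ * (1 - α))
    (f : ℝ → ℝ)
    (hf : ∀ t : ℝ, 0 < t →
      f t = ∑' j : ℕ, (-lam) ^ j * t ^ (α * j + β - 1) / Real.Gamma (α * j + β)) :
    ∀ t : ℝ, 0 < t →
      riemannLiouville (μ * (1 - α))
        (fun s => deriv (riemannLiouville ((1 - μ) * (1 - α)) f) s) t = -lam * f t :=
  hilfer_eigenfunction_general α μ lam β hα0 hα1 hμ0 hμ1 hβ f hf
end

section
/- Let l > 0, let τ : [0,l] → ℝ be continuously differentiable with τ(l) = 0, let Q₁ : [0,l] → ℝ be continuous, and let Q : [0,l] × [0,l] → ℝ be continuous such that for every fixed x ∈ [0,l] the function z ↦ Q(x,z) is differentiable with ∂Q/∂z(x,z) = −Q₁(x)·Q₁(z). Then ∫_0^l τ(x) ( ∫_x^l τ'(z) Q(x,z) dz ) dx = −∫_0^l τ(x)² Q(x,x) dx + (1/2) ( ∫_0^l τ(z) Q₁(z) dz )². -/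
/-!
Integrating by parts in `z`, with `∂Q/∂z(x,z) = -Q₁(x)Q₁(z)` and `τ(l) = 0`, turns the inner
integral into `-τ(x)Q(x,x) + Q₁(x)Φ(x)` with `Φ(x) = ∫_x^l τQ₁`. Since `Φ' = -τQ₁` and
`Φ(l) = 0`, the remaining term `∫_0^l τQ₁Φ` equals `Φ(0)²/2`.
-/

open Real Set intervalIntegral

section TailIntegral

variable {a b : ℝ} {f : ℝ → ℝ}

theorem hasDerivWithinAt_integral_tail (hf : ContinuousOn f (Icc a b)) {x : ℝ}
    (hx : x ∈ Icc a b) :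
    HasDerivWithinAt (fun y => ∫ z in y..b, f z) (-f x) (Icc a b) x := by
  have : Fact (x ∈ Icc a b) := ⟨hx⟩
  have hsub : uIcc x b ⊆ Icc a b := uIcc_subset_Icc hx (right_mem_Icc.2 (hx.1.trans hx.2))
  exact integral_hasDerivWithinAt_left (hf.mono hsub).intervalIntegrable
    (hf.stronglyMeasurableAtFilter_nhdsWithin measurableSet_Icc x) (hf x hx)

theorem continuousOn_integral_tail (hf : ContinuousOn f (Icc a b)) :
    ContinuousOn (fun y => ∫ z in y..b, f z) (Icc a b) := fun _ hx =>
  (hasDerivWithinAt_integral_tail hf hx).continuousWithinAt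

/-- Integration by parts with `u = v = F := ∫_·^b f` gives `∫ F F' = -F(a)² - ∫ F' F`. -/
theorem integral_mul_integral_tail (hab : a ≤ b) (hf : ContinuousOn f (Icc a b)) :
    ∫ x in a..b, f x * ∫ z in x..b, f z = (∫ z in a..b, f z) ^ 2 / 2 := by
  have hF : ∀ x ∈ uIcc a b,
      HasDerivWithinAt (fun y => ∫ z in y..b, f z) (-f x) (uIcc a b) x := by
    rw [uIcc_of_le hab]
    exact fun x hx => hasDerivWithinAt_integral_tail hf hx
  have hf' : IntervalIntegrable (fun x => -f x) MeasureTheory.volume a b :=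
    (hf.neg.mono (uIcc_of_le hab).subset).intervalIntegrable
  have hparts := integral_mul_deriv_eq_deriv_mul_of_hasDerivWithinAt hF hF hf' hf'
  simp only [integral_same, neg_mul, mul_neg, integral_neg, ← sq] at hparts
  rw [integral_congr fun x _ => mul_comm (∫ z in x..b, f z) (f x)] at hparts
  linarith

end TailIntegral

theorem integral_deriv_mul_eq_of_hasDerivWithinAt_neg_const_mul {a b x c : ℝ}
    {u u' K q : ℝ → ℝ} (hx : x ∈ Icc a b)
    (hu : ∀ z ∈ Icc a b, HasDerivWithinAt u (u' z) (Icc a b) z)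
    (hu' : ContinuousOn u' (Icc a b)) (hub : u b = 0)
    (hK : ∀ z ∈ Icc a b, HasDerivWithinAt K (-(c * q z)) (Icc a b) z)
    (hq : ContinuousOn q (Icc a b)) :
    ∫ z in x..b, u' z * K z = -(u x * K x) + c * ∫ z in x..b, u z * q z := by
  have hsub : uIcc x b ⊆ Icc a b := uIcc_subset_Icc hx (right_mem_Icc.2 (hx.1.trans hx.2))
  have hparts := integral_mul_deriv_eq_deriv_mul_of_hasDerivWithinAt (a := x) (b := b)
    (u := K) (v := u) (u' := fun z => -(c * q z)) (v' := u')
    (fun z hz => (hK z (hsub hz)).mono hsub) (fun z hz => (hu z (hsub hz)).mono hsub)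
    ((hq.mono hsub).const_smul c).neg.intervalIntegrable (hu'.mono hsub).intervalIntegrable
  have hkernel : ∫ z in x..b, -(c * q z) * u z = -(c * ∫ z in x..b, u z * q z) := by
    rw [← integral_const_mul, ← integral_neg]
    exact integral_congr fun z _ => by ring
  simp_rw [mul_comm (u' _)]
  rw [hparts, hkernel, hub, mul_zero]
  ring

/-- Integration-by-parts identity for a multiplicative kernel
(`∂Q/∂z(x,z) = -Q₁(x)Q₁(z)`): for `τ ∈ C¹[0,l]` with `τ(l) = 0`,
`∫_0^l τ(x)(∫_x^l τ'(z)Q(x,z)dz)dx = -∫_0^l τ(x)²Q(x,x)dx + (1/2)(∫_0^l τQ₁)²`. -/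
theorem energy_integral_kernel_Q
    (l : ℝ) (hl : 0 < l)
    (τ τ' : ℝ → ℝ)
    (hτ' : ∀ x ∈ Icc (0 : ℝ) l, HasDerivWithinAt τ (τ' x) (Icc 0 l) x)
    (hτ'cont : ContinuousOn τ' (Icc 0 l))
    (hτl : τ l = 0)
    (Q₁ : ℝ → ℝ) (hQ₁ : ContinuousOn Q₁ (Icc 0 l))
    (Q : ℝ → ℝ → ℝ)
    (hQcont : ContinuousOn (fun p : ℝ × ℝ => Q p.1 p.2) (Icc 0 l ×ˢ Icc 0 l))
    (hQz : ∀ x ∈ Icc (0 : ℝ) l, ∀ z ∈ Icc (0 : ℝ) l,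
      HasDerivWithinAt (fun z' => Q x z') (-(Q₁ x * Q₁ z)) (Icc 0 l) z) :
    ∫ x in (0 : ℝ)..l, τ x * ∫ z in x..l, τ' z * Q x z =
      -(∫ x in (0 : ℝ)..l, (τ x) ^ 2 * Q x x) +
        (1 / 2) * (∫ z in (0 : ℝ)..l, τ z * Q₁ z) ^ 2 := by
  have hτ : ContinuousOn τ (Icc 0 l) := fun x hx => (hτ' x hx).continuousWithinAt
  have hτQ₁ : ContinuousOn (fun z => τ z * Q₁ z) (Icc 0 l) := hτ.mul hQ₁
  have hdiag : ContinuousOn (fun x => τ x ^ 2 * Q x x) (Icc 0 l) :=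
    (hτ.pow 2).mul <| hQcont.comp (continuous_id.prodMk continuous_id).continuousOn
      fun _ hx => ⟨hx, hx⟩
  have hIcc : uIcc 0 l = Icc 0 l := uIcc_of_le hl.le
  calc ∫ x in (0 : ℝ)..l, τ x * ∫ z in x..l, τ' z * Q x z
      = ∫ x in (0 : ℝ)..l, (-(τ x ^ 2 * Q x x) + τ x * Q₁ x * ∫ z in x..l, τ z * Q₁ z) := by
        refine integral_congr fun x hx => ?_
        rw [hIcc] at hx
        rw [integral_deriv_mul_eq_of_hasDerivWithinAt_neg_const_mul hx hτ' hτ'cont hτl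
          (hQz x hx) hQ₁]
        ring
    _ = -(∫ x in (0 : ℝ)..l, τ x ^ 2 * Q x x) + (∫ z in (0 : ℝ)..l, τ z * Q₁ z) ^ 2 / 2 := by
        rw [integral_add, integral_neg, integral_mul_integral_tail hl.le hτQ₁]
        · exact (hIcc ▸ hdiag).neg.intervalIntegrable
        · exact (hIcc ▸ hτQ₁.mul (continuousOn_integral_tail hτQ₁)).intervalIntegrable
    _ = _ := by ring
end
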